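/- arXiv:math/0510549 — 4 statements merged into one kernel-verified Lean document; each statement's English description precedes it below -/
import Mathlib

section
/- Let h be a positive integer, A = {m ∈ ℤ : m ≥ h}, and let (φ_m)_{m∈ℕ} be an asymptotic sequence of functions A → ℂ. Let M ≥ 1, let q_1, …, q_M ∈ [0,1) be pairwise distinct, and let c_m^j ∈ ℂ for 1 ≤ j ≤ M and m ∈ ℕ. If for every N ∈ ℕ one has Σ_{j=1}^{M} e^{2πik q_j} Σ_{m=0}^{N} c_m^j φ_m(k) = o(φ_N(k)) as k → ∞, then c_m^j = 0 for all j and m. Consequently, any function A → ℂ has at most one asymptotic expansion of generalized Poincaré type (with pairwise distinct frequencies q_j) with respect to a given asymptotic sequence. -/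
open Finset
open Matrix

lemma key_vanish (M : ℕ) (z : Fin M → ℂ) (hz : ∀ j, ‖z j‖ = 1)
    (hinj : Function.Injective z) (c : Fin M → ℂ)
    (hsum : ∀ ε : ℝ, 0 < ε → ∃ K : ℤ, ∀ k : ℤ, K ≤ k → ‖∑ j, c j * z j ^ k‖ ≤ ε) :
    ∀ j, c j = 0 := by
  classical
  have hzne : ∀ j, z j ≠ 0 := fun j => by
    intro hz0; have := hz j; rw [hz0] at this; simp at this
  set V : Matrix (Fin M) (Fin M) ℂ := (Matrix.vandermonde z)ᵀ with hV
  have hdet : IsUnit V.det := by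
    rw [isUnit_iff_ne_zero, hV, Matrix.det_transpose, Matrix.det_vandermonde]
    refine Finset.prod_ne_zero_iff.mpr fun i _ => Finset.prod_ne_zero_iff.mpr fun j hj => ?_
    have : i ≠ j := fun e => by subst e; simp at hj
    exact sub_ne_zero.mpr fun e => this (hinj e.symm)
  set W := V⁻¹ with hW
  have hbound : ∀ j, ∀ ε : ℝ, 0 < ε → ‖c j‖ ≤ ε * ∑ i, ‖W j i‖ := by
    intro j ε hε
    obtain ⟨K, hK⟩ := hsum ε hε
    set u : Fin M → ℂ := fun j => c j * z j ^ K with hu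
    set f : Fin M → ℂ := fun i => ∑ j, c j * z j ^ (K + (i : ℤ)) with hf
    have hVu : V.mulVec u = f := by
      funext i
      simp only [Matrix.mulVec, dotProduct, hV, Matrix.transpose_apply,
        Matrix.vandermonde_apply, hu, hf]
      refine Finset.sum_congr rfl fun j _ => ?_
      rw [zpow_add₀ (hzne j), zpow_natCast]; ring
    have huW : u = W.mulVec f := by
      rw [← hVu, Matrix.mulVec_mulVec, hW, Matrix.nonsing_inv_mul V hdet, Matrix.one_mulVec]
    have hnu : ‖u j‖ = ‖c j‖ := by
      rw [hu]; simp [norm_zpow, hz j]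
    rw [← hnu, huW]
    calc ‖(W.mulVec f) j‖ = ‖∑ i, W j i * f i‖ := rfl
      _ ≤ ∑ i, ‖W j i * f i‖ := norm_sum_le _ _
      _ ≤ ∑ i, ‖W j i‖ * ε := by
          refine Finset.sum_le_sum fun i _ => ?_
          rw [norm_mul]
          exact mul_le_mul_of_nonneg_left (hK _ (by linarith [Int.ofNat_nonneg (i : ℕ)] <;> omega)) (norm_nonneg _)
      _ = ε * ∑ i, ‖W j i‖ := by rw [← Finset.sum_mul]; ring
  intro j
  by_contra hcj
  have hpos : 0 < ‖c j‖ := norm_pos_iff.mpr hcj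
  obtain ⟨B, hBnn, hb⟩ : ∃ B : ℝ, 0 ≤ B ∧ ∀ ε : ℝ, 0 < ε → ‖c j‖ ≤ ε * B :=
    ⟨∑ i, ‖W j i‖, Finset.sum_nonneg fun i _ => norm_nonneg _, fun ε hε => hbound j ε hε⟩
  have := hb (‖c j‖ / (2 * (B + 1))) (by positivity)
  have hlt : ‖c j‖ / (2 * (B + 1)) * B < ‖c j‖ := by
    rw [div_mul_eq_mul_div, div_lt_iff₀ (by positivity)]
    nlinarith
  linarith

/-- Uniqueness of asymptotic expansions of generalized Poincaré type: if a generalized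
Poincaré-type expansion (with pairwise distinct frequencies `q j ∈ [0,1)`) of the zero
function holds, then all its coefficients vanish. -/
theorem uniqueness_of_generalized_poincare_asymptotic_expansion
    (h : ℤ) (hh : 0 < h)
    (φ : ℕ → ℤ → ℂ)
    (hφ_ne : ∀ n : ℕ, ∃ K : ℤ, ∀ k : ℤ, K ≤ k → φ n k ≠ 0)
    (hφ_o : ∀ n : ℕ, ∀ ε : ℝ, 0 < ε → ∃ K : ℤ, ∀ k : ℤ, K ≤ k →
      ‖φ (n + 1) k‖ ≤ ε * ‖φ n k‖)
    (M : ℕ) (hM : 1 ≤ M)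
    (q : Fin M → ℝ) (hq : ∀ j, q j ∈ Set.Ico (0 : ℝ) 1)
    (hq_inj : Function.Injective q)
    (c : Fin M → ℕ → ℂ)
    (hc : ∀ N : ℕ, ∀ ε : ℝ, 0 < ε → ∃ K : ℤ, ∀ k : ℤ, K ≤ k →
      ‖∑ j, Complex.exp (2 * (Real.pi : ℂ) * Complex.I * (k : ℂ) * (q j : ℂ)) *
          ∑ m ∈ range (N + 1), c j m * φ m k‖ ≤ ε * ‖φ N k‖) :
    ∀ (j : Fin M) (m : ℕ), c j m = 0 := by
  set z : Fin M → ℂ := fun j => Complex.exp (2 * (Real.pi : ℂ) * Complex.I * (q j : ℂ)) with hz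
  have hznorm : ∀ j, ‖z j‖ = 1 := by
    intro j
    rw [hz]
    rw [Complex.norm_exp]
    simp [Complex.exp_re, Complex.mul_re, Complex.mul_im]
  have hzpow : ∀ (j : Fin M) (k : ℤ),
      Complex.exp (2 * (Real.pi : ℂ) * Complex.I * (k : ℂ) * (q j : ℂ)) = z j ^ k := by
    intro j k
    rw [hz, ← Complex.exp_int_mul]
    ring_nf
  have hzinj : Function.Injective z := by
    intro i j hij
    apply hq_inj
    rw [hz] at hij
    rw [Complex.exp_eq_exp_iff_exists_int] at hij
    obtain ⟨n, hn⟩ := hij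
    have h2 : (q i : ℂ) = (q j : ℂ) + n := by
      have hπ : (2 * (Real.pi : ℂ) * Complex.I) ≠ 0 := by
        simp [Real.pi_ne_zero, Complex.I_ne_zero, Complex.ofReal_ne_zero]
      have : 2 * (Real.pi : ℂ) * Complex.I * (q i : ℂ) =
          2 * (Real.pi : ℂ) * Complex.I * ((q j : ℂ) + n) := by rw [hn]; ring
      exact mul_left_cancel₀ hπ this
    have h3 : (q i : ℝ) = q j + n := by exact_mod_cast h2
    obtain ⟨hi0, hi1⟩ := hq i
    obtain ⟨hj0, hj1⟩ := hq j
    have : n = 0 := by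
      have := h3
      rcases lt_trichotomy n 0 with hlt | he | hgt
      · exfalso
        have : (n:ℝ) ≤ -1 := by exact_mod_cast (by omega : n ≤ -1)
        linarith
      · exact he
      · exfalso; have : (1:ℝ) ≤ n := by exact_mod_cast hgt
        linarith
    rw [this] at h3; simpa using h3
  suffices H : ∀ m : ℕ, ∀ j : Fin M, c j m = 0 by
    intro j m; exact H m j
  intro m
  induction m using Nat.strong_induction_on with
  | _ m IH =>
    apply key_vanish M z hznorm hzinj
    intro ε hε
    obtain ⟨K1, hK1⟩ := hc m ε hε
    obtain ⟨K2, hK2⟩ := hφ_ne m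
    refine ⟨max K1 K2, fun k hk => ?_⟩
    have hk1 : K1 ≤ k := le_trans (le_max_left _ _) hk
    have hk2 : K2 ≤ k := le_trans (le_max_right _ _) hk
    have hφne : φ m k ≠ 0 := hK2 k hk2
    have hinner : ∀ j, ∑ m' ∈ range (m + 1), c j m' * φ m' k = c j m * φ m k := by
      intro j
      rw [Finset.sum_eq_single_of_mem m (Finset.self_mem_range_succ m)]
      intro b hb hbm
      have : b < m := by
        have := Finset.mem_range.mp hb; omega
      rw [IH b this j, zero_mul]
    have key : ∑ j, Complex.exp (2 * (Real.pi : ℂ) * Complex.I * (k : ℂ) * (q j : ℂ)) *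
          ∑ m' ∈ range (m + 1), c j m' * φ m' k = (∑ j, c j m * z j ^ k) * φ m k := by
      rw [Finset.sum_mul]
      refine Finset.sum_congr rfl fun j _ => ?_
      rw [hinner j, hzpow j k]; ring
    have := hK1 k hk1
    rw [key, norm_mul] at this
    have hφpos : 0 < ‖φ m k‖ := norm_pos_iff.mpr hφne
    exact le_of_mul_le_mul_right this hφpos
end

section
/- Let M ≥ 1, let c_1, …, c_M ∈ ℂ, let q_1, …, q_M ∈ [0,1) be pairwise distinct, and set g(k) = Σ_{j=1}^{M} c_j e^{2πik q_j} for k ∈ ℕ. If g(k) → 0 as k → ∞ through the nonnegative integers, then c_j = 0 for every j = 1, …, M. -/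
open Finset Filter

lemma cesaro_pow_tendsto_zero {z : ℂ} (hz : ‖z‖ = 1) (h1 : z ≠ 1) :
    Tendsto (fun N : ℕ => ((N : ℝ)⁻¹ : ℝ) • ∑ k ∈ Finset.range N, z ^ k) atTop (nhds 0) := by
  have hzsub : z - 1 ≠ 0 := sub_ne_zero.2 h1
  have hbound : ∀ N : ℕ, ‖∑ k ∈ Finset.range N, z ^ k‖ ≤ 2 / ‖z - 1‖ := by
    intro N
    rw [geom_sum_eq h1, norm_div]
    gcongr
    calc ‖z ^ N - 1‖ ≤ ‖z ^ N‖ + ‖(1 : ℂ)‖ := norm_sub_le _ _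
      _ = 2 := by rw [norm_pow, hz]; norm_num
  rw [tendsto_zero_iff_norm_tendsto_zero]
  have h0 : Tendsto (fun N : ℕ => (N : ℝ)⁻¹ * (2 / ‖z - 1‖)) atTop (nhds 0) := by
    simpa using (tendsto_inv_atTop_nhds_zero_nat (𝕜 := ℝ)).mul_const (2 / ‖z - 1‖)
  apply squeeze_zero (fun N => norm_nonneg _) ?_ h0
  intro N
  rw [norm_smul, norm_inv, Real.norm_natCast]
  gcongr
  exact hbound N

lemma cesaro_pow_tendsto_one :
    Tendsto (fun N : ℕ => ((N : ℝ)⁻¹ : ℝ) • ∑ k ∈ Finset.range N, (1 : ℂ) ^ k) atTop (nhds 1) := by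
  have : ∀ᶠ N : ℕ in atTop, ((N : ℝ)⁻¹ : ℝ) • ∑ k ∈ Finset.range N, (1 : ℂ) ^ k = 1 := by
    filter_upwards [eventually_ge_atTop 1] with N hN
    have hN' : (N : ℂ) ≠ 0 := Nat.cast_ne_zero.2 (by omega)
    simp [Finset.sum_const, Complex.real_smul]
    rw [inv_mul_cancel₀ hN']
  exact Tendsto.congr' (this.mono fun N h => h.symm) tendsto_const_nhds

/-- If the exponential sum `g(k) = Σ_j c_j e^{2πik q_j}` with pairwise distinct
`q_j ∈ [0,1)` tends to `0` as `k → ∞` through the nonnegative integers, then all the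
coefficients `c_j` vanish. -/
theorem exponential_sum_tendsto_zero_implies_coefficients_zero
    (M : ℕ) (hM : 1 ≤ M) (c : Fin M → ℂ) (q : Fin M → ℝ)
    (hq : ∀ j, q j ∈ Set.Ico (0 : ℝ) 1) (hq_inj : Function.Injective q)
    (hg : Tendsto (fun k : ℕ =>
        ∑ j, c j * Complex.exp (2 * (Real.pi : ℂ) * Complex.I * (k : ℂ) * (q j : ℂ)))
      atTop (nhds 0)) :
    ∀ j : Fin M, c j = 0 := by
  intro j₀
  set e : Fin M → ℂ := fun j => Complex.exp (2 * Real.pi * Complex.I * ((q j : ℂ) - (q j₀ : ℂ))) with he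
  have key : ∀ k : ℕ, ∀ j : Fin M,
      c j * Complex.exp (2 * (Real.pi : ℂ) * Complex.I * (k : ℂ) * (q j : ℂ)) *
        Complex.exp (-(2 * Real.pi * Complex.I * (k : ℂ) * (q j₀ : ℂ)))
      = c j * (e j) ^ k := by
    intro k j
    rw [mul_assoc, ← Complex.exp_add, he]
    congr 1
    rw [← Complex.exp_nat_mul]
    congr 1
    ring
  have hnorm1 : ∀ (x : ℝ), ‖Complex.exp (2 * Real.pi * Complex.I * (x : ℂ))‖ = 1 := by
    intro x
    have hx : (2 * (Real.pi : ℂ) * Complex.I * (x : ℂ)) = ((2 * Real.pi * x : ℝ) : ℂ) * Complex.I := by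
      push_cast; ring
    rw [hx, Complex.norm_exp_ofReal_mul_I]
  -- h tends to 0
  have hh : Tendsto (fun k : ℕ => ∑ j, c j * (e j) ^ k) atTop (nhds 0) := by
    rw [tendsto_zero_iff_norm_tendsto_zero]
    rw [tendsto_zero_iff_norm_tendsto_zero] at hg
    apply hg.congr
    intro k
    have hEq : ∑ j, c j * (e j) ^ k
        = (∑ j, c j * Complex.exp (2 * (Real.pi : ℂ) * Complex.I * (k : ℂ) * (q j : ℂ)))
          * Complex.exp (-(2 * Real.pi * Complex.I * (k : ℂ) * (q j₀ : ℂ))) := by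
      rw [Finset.sum_mul]
      exact Finset.sum_congr rfl fun j _ => (key k j).symm
    rw [hEq, norm_mul]
    have h2 : ‖Complex.exp (-(2 * Real.pi * Complex.I * (k : ℂ) * (q j₀ : ℂ)))‖ = 1 := by
      rw [Complex.exp_neg, norm_inv]
      have : (2 * (Real.pi : ℂ) * Complex.I * (k : ℂ) * (q j₀ : ℂ))
          = 2 * Real.pi * Complex.I * (((k : ℝ) * q j₀ : ℝ) : ℂ) := by push_cast; ring
      rw [this, hnorm1]; norm_num
    rw [h2, mul_one]
  -- Cesàro
  have hces := hh.cesaro_smul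
  -- the Cesàro average also tends to c j₀
  have hlim : Tendsto (fun N : ℕ => ((N : ℝ)⁻¹ : ℝ) • ∑ k ∈ Finset.range N, ∑ j, c j * (e j) ^ k)
      atTop (nhds (c j₀)) := by
    have hswap : ∀ N : ℕ, ((N : ℝ)⁻¹ : ℝ) • ∑ k ∈ Finset.range N, ∑ j, c j * (e j) ^ k
        = ∑ j, c j * (((N : ℝ)⁻¹ : ℝ) • ∑ k ∈ Finset.range N, (e j) ^ k) := by
      intro N
      rw [Finset.sum_comm, Finset.smul_sum]
      refine Finset.sum_congr rfl fun j _ => ?_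
      rw [← Finset.mul_sum, Complex.real_smul, Complex.real_smul]
      ring
    have hterm : ∀ j : Fin M, Tendsto (fun N : ℕ => c j * (((N : ℝ)⁻¹ : ℝ) • ∑ k ∈ Finset.range N, (e j) ^ k))
        atTop (nhds (c j * (if j = j₀ then 1 else 0))) := by
      intro j
      by_cases hj : j = j₀
      · subst hj
        have he1 : e j = 1 := by
          rw [he]; simp
        rw [if_pos rfl]
        exact (cesaro_pow_tendsto_one.const_mul (c j)).congr (by intro N; rw [he1])
      · rw [if_neg hj, mul_zero]
        have harg : (2 * (Real.pi : ℂ) * Complex.I * ((q j : ℂ) - (q j₀ : ℂ)))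
            = 2 * Real.pi * Complex.I * (((q j - q j₀ : ℝ)) : ℂ) := by push_cast; ring
        have hnz : ‖e j‖ = 1 := by
          simp only [he]
          rw [harg, hnorm1]
        have hne1 : e j ≠ 1 := by
          simp only [he]
          intro hcon
          rw [Complex.exp_eq_one_iff] at hcon
          obtain ⟨n, hn⟩ := hcon
          have h2pi : (2 * (Real.pi : ℂ) * Complex.I) ≠ 0 := by
            simp [Real.pi_ne_zero, Complex.I_ne_zero]
          have hqq : ((q j : ℂ) - (q j₀ : ℂ)) = (n : ℂ) := by
            have : 2 * (Real.pi : ℂ) * Complex.I * ((q j : ℂ) - (q j₀ : ℂ))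
                = 2 * (Real.pi : ℂ) * Complex.I * (n : ℂ) := by rw [hn]; ring
            exact mul_left_cancel₀ h2pi this
          have hqr : q j - q j₀ = (n : ℝ) := by
            exact_mod_cast hqq
          have h1 : q j - q j₀ ≠ 0 := sub_ne_zero.2 fun h => hj (hq_inj h) 
          have hlt : |q j - q j₀| < 1 := by
            obtain ⟨h0j, h1j⟩ := hq j
            obtain ⟨h0j₀, h1j₀⟩ := hq j₀
            rw [abs_lt]; constructor <;> linarith
          rw [hqr] at h1 hlt
          have hn0 : n = 0 := by
            have h3 : |n| < 1 := by exact_mod_cast (by push_cast; exact hlt : |(n:ℝ)| < 1)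
            have := abs_lt.mp h3
            omega
          exact h1 (by exact_mod_cast hn0)
        have := (cesaro_pow_tendsto_zero hnz hne1).const_mul (c j)
        simpa using this
    have := tendsto_finset_sum Finset.univ (fun j _ => hterm j)
    have hsum : ∑ j, c j * (if j = j₀ then (1:ℂ) else 0) = c j₀ := by
      simp [Finset.sum_ite_eq', mul_comm]
    rw [hsum] at this
    exact this.congr fun N => (hswap N).symm
  exact tendsto_nhds_unique hlim hces
end

section
/- Let h be a positive integer and A = {m ∈ ℤ : m ≥ h}. If f_1 : A → ℂ has an asymptotic expansion of quantum type with respect to a positive integer b_1 and f_2 : A → ℂ has an asymptotic expansion of quantum type with respect to a positive integer b_2, then f_1 + f_2 and f_1 · f_2 each have an asymptotic expansion of quantum type with respect to lcm(b_1, b_2). In particular, the set of functions A → ℂ admitting an asymptotic expansion of quantum type is a subalgebra of the ℂ-algebra of all functions A → ℂ. -/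
open Finset

/-- `f : A → ℂ` (with `A = {m : ℤ | h ≤ m}`) has an asymptotic expansion of quantum type
with respect to the positive integer `b`: there are an integer `a`, finitely many
frequencies `q_j ∈ [0,1)` and coefficients `c_m^j` such that for every `N`,
`f(k) − Σ_j e^{2πik q_j} Σ_{m=0}^{N} c_m^j k^{(a−m)/b} = o(k^{(a−N)/b})` as `k → ∞`. -/
def HasQuantumExpansion (h : ℤ) (b : ℕ) (f : ℤ → ℂ) : Prop :=
  ∃ (a : ℤ) (M : ℕ) (q : Fin M → ℝ) (c : Fin M → ℕ → ℂ),
    (∀ j, q j ∈ Set.Ico (0 : ℝ) 1) ∧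
    ∀ N : ℕ, ∀ ε : ℝ, 0 < ε → ∃ K : ℤ, h ≤ K ∧ ∀ k : ℤ, K ≤ k →
      ‖f k - ∑ j, Complex.exp (2 * (Real.pi : ℂ) * Complex.I * (k : ℂ) * (q j : ℂ)) *
          ∑ m ∈ range (N + 1), c j m * (((k : ℝ) ^ (((a : ℝ) - (m : ℝ)) / (b : ℝ)) : ℝ) : ℂ)‖
        ≤ ε * (k : ℝ) ^ (((a : ℝ) - (N : ℝ)) / (b : ℝ))

open Filter Asymptotics

noncomputable def pS (b : ℕ) (a : ℤ) {M : ℕ} (q : Fin M → ℝ) (c : Fin M → ℕ → ℂ)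
    (N : ℕ) (k : ℤ) : ℂ :=
  ∑ j, Complex.exp (2 * (Real.pi : ℂ) * Complex.I * (k : ℂ) * (q j : ℂ)) *
      ∑ m ∈ range (N + 1), c j m * (((k : ℝ) ^ (((a : ℝ) - (m : ℝ)) / (b : ℝ)) : ℝ) : ℂ)

def QE (b : ℕ) (f : ℤ → ℂ) : Prop :=
  ∃ (a : ℤ) (M : ℕ) (q : Fin M → ℝ) (c : Fin M → ℕ → ℂ),
    (∀ j, q j ∈ Set.Ico (0 : ℝ) 1) ∧
    ∀ N : ℕ, (fun k : ℤ => f k - pS b a q c N k)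
      =o[atTop] fun k : ℤ => ((k : ℝ) ^ (((a : ℝ) - (N : ℝ)) / (b : ℝ)))

-- rpow comparison lemmas along ℤ atTop
lemma rpow_littleO {x y : ℝ} (hxy : x < y) :
    (fun k : ℤ => ((k : ℝ) ^ x)) =o[atTop] fun k : ℤ => ((k : ℝ) ^ y) := by
  have hreal : (fun t : ℝ => t ^ x) =o[atTop] fun t : ℝ => t ^ y := by
    rw [isLittleO_iff_tendsto']
    · have h0 : Tendsto (fun t : ℝ => t ^ (x - y)) atTop (nhds 0) := by
        simpa using tendsto_rpow_neg_atTop (by linarith : 0 < y - x)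
      refine h0.congr' ?_
      filter_upwards [eventually_gt_atTop (0:ℝ)] with t ht
      rw [Real.rpow_sub ht, div_eq_mul_inv, ← div_eq_mul_inv]
    · filter_upwards [eventually_gt_atTop (0:ℝ)] with t ht h
      exact absurd h (Real.rpow_pos_of_pos ht _).ne'
  exact hreal.comp_tendsto tendsto_intCast_atTop_atTop

lemma rpow_bigO {x y : ℝ} (hxy : x ≤ y) :
    (fun k : ℤ => ((k : ℝ) ^ x)) =O[atTop] fun k : ℤ => ((k : ℝ) ^ y) := by
  rw [isBigO_iff]
  refine ⟨1, ?_⟩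
  filter_upwards [eventually_ge_atTop (1:ℤ)] with k hk
  have hk1 : (1:ℝ) ≤ (k:ℝ) := by exact_mod_cast hk
  have h0 : (0:ℝ) ≤ (k:ℝ) := by linarith
  rw [Real.norm_of_nonneg (Real.rpow_nonneg h0 _), Real.norm_of_nonneg (Real.rpow_nonneg h0 _),
    one_mul]
  exact Real.rpow_le_rpow_of_exponent_le hk1 hxy

lemma norm_qexp (k : ℤ) (q : ℝ) :
    ‖Complex.exp (2 * (Real.pi : ℂ) * Complex.I * (k : ℂ) * (q : ℂ))‖ = 1 := by
  rw [show 2 * (Real.pi : ℂ) * Complex.I * (k : ℂ) * (q : ℂ)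
      = ((2 * Real.pi * k * q : ℝ) : ℂ) * Complex.I by push_cast; ring]
  rw [Complex.norm_exp_ofReal_mul_I]

lemma term_isBigO {e e' : ℝ} (he : e ≤ e') (c : ℂ) (u : ℤ → ℂ) (hu : ∀ k, ‖u k‖ = 1) :
    (fun k : ℤ => u k * (c * (((k : ℝ) ^ e : ℝ) : ℂ)))
      =O[atTop] fun k : ℤ => ((k : ℝ) ^ e' : ℝ) := by
  rw [isBigO_iff]
  refine ⟨‖c‖, ?_⟩
  filter_upwards [eventually_ge_atTop (1:ℤ)] with k hk
  have hk1 : (1:ℝ) ≤ (k:ℝ) := by exact_mod_cast hk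
  have h0 : (0:ℝ) ≤ (k:ℝ) := by linarith
  rw [norm_mul, hu, one_mul, norm_mul, Complex.norm_real,
    Real.norm_of_nonneg (Real.rpow_nonneg h0 _), Real.norm_of_nonneg (Real.rpow_nonneg h0 _)]
  exact mul_le_mul_of_nonneg_left
    (Real.rpow_le_rpow_of_exponent_le hk1 he) (norm_nonneg _)

lemma pS_isBigO {b : ℕ} (hb : 0 < b) (a : ℤ) {M : ℕ} (q : Fin M → ℝ) (c : Fin M → ℕ → ℂ)
    (N : ℕ) {e' : ℝ} (he' : (a : ℝ) / b ≤ e') :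
    (fun k : ℤ => pS b a q c N k) =O[atTop] fun k : ℤ => ((k : ℝ) ^ e') := by
  unfold pS
  refine IsBigO.fun_sum fun j _ => ?_
  have hrw : (fun k : ℤ => Complex.exp (2 * (Real.pi : ℂ) * Complex.I * (k : ℂ) * (q j : ℂ)) *
      ∑ m ∈ range (N + 1), c j m * (((k : ℝ) ^ (((a : ℝ) - (m : ℝ)) / (b : ℝ)) : ℝ) : ℂ))
      = fun k : ℤ => ∑ m ∈ range (N + 1),
        Complex.exp (2 * (Real.pi : ℂ) * Complex.I * (k : ℂ) * (q j : ℂ)) *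
          (c j m * (((k : ℝ) ^ (((a : ℝ) - (m : ℝ)) / (b : ℝ)) : ℝ) : ℂ)) := by
    funext k; rw [mul_sum]
  rw [hrw]
  refine IsBigO.fun_sum fun m _ => ?_
  refine term_isBigO ?_ _ _ (fun k => norm_qexp k (q j))
  have hb' : (0:ℝ) < (b:ℝ) := by exact_mod_cast hb
  have : ((a:ℝ) - (m:ℝ)) / b ≤ (a:ℝ) / b :=
    div_le_div_of_nonneg_right (by simp) hb'.le |>.trans le_rfl
  linarith

lemma QE_f_isBigO {b : ℕ} {f : ℤ → ℂ} {a : ℤ} {M : ℕ} {q : Fin M → ℝ} {c : Fin M → ℕ → ℂ}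
    (hb : 0 < b)
    (hN : ∀ N : ℕ, (fun k : ℤ => f k - pS b a q c N k)
      =o[atTop] fun k : ℤ => ((k : ℝ) ^ (((a : ℝ) - (N : ℝ)) / (b : ℝ)))) :
    f =O[atTop] fun k : ℤ => ((k : ℝ) ^ ((a : ℝ) / (b : ℝ))) := by
  have h0 := (hN 0).isBigO
  have hrw : f = fun k => (f k - pS b a q c 0 k) + pS b a q c 0 k := by funext k; ring
  rw [hrw]
  refine IsBigO.add (h0.trans (rpow_bigO ?_)) (pS_isBigO hb a q c 0 le_rfl)
  simp

lemma hasQE_iff {h : ℤ} (hh : 0 < h) (b : ℕ) (f : ℤ → ℂ) :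
    HasQuantumExpansion h b f ↔ QE b f := by
  constructor
  · rintro ⟨a, M, q, c, hq, hbd⟩
    refine ⟨a, M, q, c, hq, fun N => ?_⟩
    rw [isLittleO_iff]
    intro ε hε
    obtain ⟨K, -, hK⟩ := hbd N ε hε
    rw [eventually_atTop]
    refine ⟨max K 1, fun k hk => ?_⟩
    have h1 : (1:ℤ) ≤ k := le_trans (le_max_right _ _) hk
    have := hK k (le_trans (le_max_left _ _) hk)
    refine le_trans this (mul_le_mul_of_nonneg_left (le_abs_self _) hε.le)
  · rintro ⟨a, M, q, c, hq, hbd⟩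
    refine ⟨a, M, q, c, hq, fun N ε hε => ?_⟩
    obtain ⟨K₀, hK₀⟩ := (isLittleO_iff.1 (hbd N) hε).exists_forall_of_atTop
    refine ⟨max K₀ (max h 1), le_trans (le_max_left _ _) (le_max_right _ _), fun k hk => ?_⟩
    have h1 : (1:ℤ) ≤ k := le_trans (le_trans (le_max_right _ _) (le_max_right _ _)) hk
    have h0 : (0:ℝ) ≤ (k:ℝ) := by exact_mod_cast le_trans zero_le_one h1
    have := hK₀ k (le_trans (le_max_left _ _) hk)
    rwa [Real.norm_of_nonneg (Real.rpow_nonneg h0 _)] at this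
lemma QE_shift {b : ℕ} (hb : 0 < b) {f : ℤ → ℂ} {a : ℤ} {M : ℕ} {q : Fin M → ℝ}
    {c : Fin M → ℕ → ℂ}
    (hN : ∀ N : ℕ, (fun k : ℤ => f k - pS b a q c N k)
      =o[atTop] fun k : ℤ => ((k : ℝ) ^ (((a : ℝ) - (N : ℝ)) / (b : ℝ)))) (s : ℕ) :
    ∃ c' : Fin M → ℕ → ℂ, ∀ N : ℕ, (fun k : ℤ => f k - pS b (a + s) q c' N k)
      =o[atTop] fun k : ℤ => ((k : ℝ) ^ ((((a + s : ℤ) : ℝ) - (N : ℝ)) / (b : ℝ))) := by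
  refine ⟨fun j m => if m < s then 0 else c j (m - s), fun N => ?_⟩
  rcases le_or_gt s N with hsN | hsN
  · have hps : pS b (a + s) q (fun j m => if m < s then 0 else c j (m - s)) N
        = pS b a q c (N - s) := by
      funext k
      unfold pS
      refine Finset.sum_congr rfl fun j _ => ?_
      congr 1
      rw [show N + 1 = s + (N - s + 1) by omega, Finset.sum_range_add]
      rw [Finset.sum_eq_zero (fun m hm => by
        simp [mem_range.1 hm]), zero_add]
      refine Finset.sum_congr rfl fun i _ => ?_
      have h2 : s + i - s = i := by omega
      have h3 : ((Int.cast (a + (s:ℤ)) : ℝ) - ((s + i : ℕ) : ℝ)) / (b : ℝ) = ((a:ℝ) - (i:ℝ))/(b:ℝ) := by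
        push_cast; ring
      simp only []
      rw [if_neg (by omega), h2, h3]
    rw [hps]
    have he : (((a + s : ℤ) : ℝ) - (N : ℝ)) / (b : ℝ)
        = ((a : ℝ) - (((N - s : ℕ) : ℕ) : ℝ)) / (b : ℝ) := by
      rw [Nat.cast_sub hsN]
      push_cast
      ring
    rw [show (fun k : ℤ => ((k : ℝ) ^ ((((a + s : ℤ) : ℝ) - (N : ℝ)) / (b : ℝ))))
      = fun k : ℤ => ((k : ℝ) ^ (((a : ℝ) - (((N - s : ℕ)) : ℝ)) / (b : ℝ))) by rw [he]]
    exact hN (N - s)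
  · have hps : ∀ k : ℤ, pS b (a + s) q (fun j m => if m < s then 0 else c j (m - s)) N k = 0 := by
      intro k
      unfold pS
      refine Finset.sum_eq_zero fun j _ => ?_
      rw [Finset.sum_eq_zero (fun m hm => by
        simp [show m < s from by have := mem_range.1 hm; omega]), mul_zero]
    have hb' : (0:ℝ) < (b:ℝ) := by exact_mod_cast hb
    have hlt : (a : ℝ) / b < (((a + s : ℤ) : ℝ) - (N : ℝ)) / (b : ℝ) := by
      rw [div_lt_div_iff₀ hb' hb']
      have : (N : ℝ) < (s : ℝ) := by exact_mod_cast hsN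
      push_cast
      nlinarith
    have := (QE_f_isBigO hb hN).trans_isLittleO (rpow_littleO hlt)
    refine this.congr' ?_ (by rfl)
    filter_upwards with k
    rw [hps k, sub_zero]
lemma QE_add {b : ℕ} {f g : ℤ → ℂ} (hb : 0 < b) (hf : QE b f) (hg : QE b g) :
    QE b (f + g) := by
  obtain ⟨a₁, M₁, q₁, c₁, hq₁, h₁⟩ := hf
  obtain ⟨a₂, M₂, q₂, c₂, hq₂, h₂⟩ := hg
  set a := max a₁ a₂ with ha
  obtain ⟨c₁', h₁'⟩ := QE_shift hb h₁ (a - a₁).toNat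
  obtain ⟨c₂', h₂'⟩ := QE_shift hb h₂ (a - a₂).toNat
  have e₁ : a₁ + ((a - a₁).toNat : ℤ) = a := by omega
  have e₂ : a₂ + ((a - a₂).toNat : ℤ) = a := by omega
  rw [e₁] at h₁'
  rw [e₂] at h₂'
  refine ⟨a, M₁ + M₂, Fin.append q₁ q₂, Fin.append c₁' c₂', ?_, fun N => ?_⟩
  · intro j
    refine Fin.addCases (fun i => ?_) (fun i => ?_) j
    · rw [Fin.append_left]; exact hq₁ i
    · rw [Fin.append_right]; exact hq₂ i
  · have hsplit : ∀ k : ℤ, pS b a (Fin.append q₁ q₂) (Fin.append c₁' c₂') N k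
        = pS b a q₁ c₁' N k + pS b a q₂ c₂' N k := by
      intro k
      unfold pS
      rw [Fin.sum_univ_add]
      congr 1
      · exact Finset.sum_congr rfl fun j _ => by rw [Fin.append_left, Fin.append_left]
      · exact Finset.sum_congr rfl fun j _ => by rw [Fin.append_right, Fin.append_right]
    have hfun : (fun k : ℤ => (f + g) k - pS b a (Fin.append q₁ q₂) (Fin.append c₁' c₂') N k)
        = fun k : ℤ => (f k - pS b a q₁ c₁' N k) + (g k - pS b a q₂ c₂' N k) := by
      funext k
      rw [hsplit k]
      simp only [Pi.add_apply]
      ring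
    rw [hfun]
    exact (h₁' N).add (h₂' N)
lemma QE_of_dvd {b₁ b : ℕ} (hb₁ : 0 < b₁) (hb : 0 < b) (hdvd : b₁ ∣ b) {f : ℤ → ℂ}
    (hf : QE b₁ f) : QE b f := by
  obtain ⟨d, hd⟩ := hdvd
  have hd0 : 0 < d := Nat.pos_of_ne_zero fun h0 => by simp [h0] at hd; omega
  obtain ⟨a, M, q, c, hq, hN⟩ := hf
  have hbR : (0:ℝ) < (b:ℝ) := by exact_mod_cast hb
  have hb₁R : (0:ℝ) < (b₁:ℝ) := by exact_mod_cast hb₁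
  refine ⟨a * d, M, q, fun j m => if d ∣ m then c j (m / d) else 0, hq, fun N => ?_⟩
  set u := N / d with hu
  have hps : ∀ k : ℤ, pS b (a * d) q (fun j m => if d ∣ m then c j (m / d) else 0) N k
      = pS b₁ a q c u k := by
    intro k
    unfold pS
    refine Finset.sum_congr rfl fun j _ => ?_
    congr 1
    have hite : ∀ m : ℕ,
        (fun j m => if d ∣ m then c j (m / d) else 0) j m *
          (((k : ℝ) ^ (((Int.cast (a * d) : ℝ) - (m : ℝ)) / (b : ℝ)) : ℝ) : ℂ)
        = if d ∣ m then c j (m / d) *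
            (((k : ℝ) ^ (((Int.cast (a * d) : ℝ) - (m : ℝ)) / (b : ℝ)) : ℝ) : ℂ) else 0 := by
      intro m
      simp only []
      split <;> simp
    rw [Finset.sum_congr rfl fun m _ => hite m, ← Finset.sum_filter]
    have hset : (range (N + 1)).filter (fun m => d ∣ m)
        = Finset.image (fun i => d * i) (range (u + 1)) := by
      ext m
      simp only [mem_filter, mem_range, Finset.mem_image]
      constructor
      · rintro ⟨hm, i, rfl⟩
        exact ⟨i, by rw [hu]; have := Nat.div_le_div_right (c := d) (Nat.le_of_lt_succ hm)
                     calc i = d * i / d := by rw [Nat.mul_div_cancel_left _ hd0]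
                     _ < _ := by omega, by ring⟩
      · rintro ⟨i, hi, rfl⟩
        refine ⟨?_, ⟨i, by ring⟩⟩
        have : d * i ≤ d * u := Nat.mul_le_mul_left d (Nat.le_of_lt_succ hi)
        have h2 : d * u ≤ N := by rw [hu]; exact Nat.mul_div_le N d |>.trans_eq (by ring_nf)
        omega
    rw [hset, Finset.sum_image (fun i _ j _ hij => Nat.eq_of_mul_eq_mul_left hd0 hij)]
    refine Finset.sum_congr rfl fun i _ => ?_
    have h1 : d * i / d = i := Nat.mul_div_cancel_left _ hd0
    have h2 : ((Int.cast (a * d) : ℝ) - ((d * i : ℕ) : ℝ)) / (b : ℝ)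
        = ((a : ℝ) - (i : ℝ)) / (b₁ : ℝ) := by
      rw [div_eq_div_iff hbR.ne' hb₁R.ne']
      push_cast [hd]
      ring
    rw [h1, h2]
  have hNlt : N < d * (u + 1) := by
    have h1 : d * u + N % d = N := by rw [hu]; exact Nat.div_add_mod N d
    calc N = d * u + N % d := h1.symm
      _ < d * u + d := Nat.add_lt_add_left (Nat.mod_lt N hd0) _
      _ = d * (u + 1) := by ring
  have hlt : ((a : ℝ) - ((u + 1 : ℕ) : ℝ)) / (b₁ : ℝ)
      < ((Int.cast (a * d) : ℝ) - (N : ℝ)) / (b : ℝ) := by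
    rw [div_lt_div_iff₀ hb₁R hbR]
    have h1 : ((N:ℝ)) < (d:ℝ) * ((u:ℝ) + 1) := by exact_mod_cast hNlt
    have hdR : (0:ℝ) < (d:ℝ) := by exact_mod_cast hd0
    have hbe : (b:ℝ) = (b₁:ℝ) * (d:ℝ) := by exact_mod_cast hd
    push_cast
    rw [hbe]
    nlinarith
  have h₁ := (hN (u + 1)).trans_isBigO (rpow_bigO hlt.le)
  have h₂ : (fun k : ℤ => pS b₁ a q c (u + 1) k - pS b₁ a q c u k)
      =o[atTop] fun k : ℤ => ((k : ℝ) ^ (((Int.cast (a * d) : ℝ) - (N : ℝ)) / (b : ℝ))) := by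
    have hdiff : (fun k : ℤ => pS b₁ a q c (u + 1) k - pS b₁ a q c u k)
        = fun k : ℤ => ∑ j, Complex.exp (2 * (Real.pi : ℂ) * Complex.I * (k : ℂ) * (q j : ℂ)) *
            (c j (u + 1) *
              (((k : ℝ) ^ (((a : ℝ) - ((u + 1 : ℕ) : ℝ)) / (b₁ : ℝ)) : ℝ) : ℂ)) := by
      funext k
      unfold pS
      rw [← Finset.sum_sub_distrib]
      refine Finset.sum_congr rfl fun j _ => ?_
      rw [Finset.sum_range_succ, mul_add]
      ring
    rw [hdiff]
    refine IsBigO.trans_isLittleO ?_ (rpow_littleO hlt)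
    exact IsBigO.fun_sum fun j _ => term_isBigO le_rfl _ _ (fun k => norm_qexp k (q j))
  have hfun : (fun k : ℤ => f k -
      pS b (a * d) q (fun j m => if d ∣ m then c j (m / d) else 0) N k)
      = fun k : ℤ => (f k - pS b₁ a q c (u + 1) k) +
        (pS b₁ a q c (u + 1) k - pS b₁ a q c u k) := by
    funext k
    rw [hps k]
    ring
  rw [hfun]
  exact h₁.add h₂
lemma qexp_fract_mul (k : ℤ) (x y : ℝ) :
    Complex.exp (2 * (Real.pi : ℂ) * Complex.I * (k : ℂ) * ((Int.fract (x + y) : ℝ) : ℂ))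
      = Complex.exp (2 * (Real.pi : ℂ) * Complex.I * (k : ℂ) * (x : ℂ)) *
        Complex.exp (2 * (Real.pi : ℂ) * Complex.I * (k : ℂ) * (y : ℂ)) := by
  have hfr : ((Int.fract (x + y) : ℝ) : ℂ) = (x : ℂ) + (y : ℂ) - ((⌊x + y⌋ : ℤ) : ℂ) := by
    rw [Int.fract]
    push_cast
    ring
  have h : 2 * (Real.pi : ℂ) * Complex.I * (k : ℂ) * ((Int.fract (x + y) : ℝ) : ℂ)
      = (2 * (Real.pi : ℂ) * Complex.I * (k : ℂ) * (x : ℂ) +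
          2 * (Real.pi : ℂ) * Complex.I * (k : ℂ) * (y : ℂ)) +
        ((-(k * ⌊x + y⌋) : ℤ) : ℂ) * (2 * (Real.pi : ℂ) * Complex.I) := by
    rw [hfr]
    push_cast
    ring
  rw [h, Complex.exp_add, Complex.exp_int_mul_two_pi_mul_I, mul_one, Complex.exp_add]

lemma tri_sum {β : Type*} [AddCommMonoid β] (N : ℕ) (G : ℕ → ℕ → β) :
    ∑ m ∈ range (N + 1), ∑ i ∈ range (m + 1), G i (m - i)
      = ∑ p ∈ ((range (N + 1)) ×ˢ (range (N + 1))).filter (fun p => p.1 + p.2 ≤ N),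
          G p.1 p.2 := by
  rw [Finset.sum_sigma']
  refine Finset.sum_nbij' (fun x => (x.2, x.1 - x.2)) (fun p => ⟨p.1 + p.2, p.1⟩)
    ?_ ?_ ?_ ?_ ?_
  · rintro ⟨m, i⟩ hx
    simp only [Finset.mem_sigma, mem_range] at hx
    simp only [Finset.mem_filter, Finset.mem_product, mem_range]
    omega
  · rintro ⟨i, i'⟩ hp
    simp only [Finset.mem_filter, Finset.mem_product, mem_range] at hp
    simp only [Finset.mem_sigma, mem_range]
    omega
  · rintro ⟨m, i⟩ hx
    simp only [Finset.mem_sigma, mem_range] at hx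
    ext <;> simp <;> omega
  · rintro ⟨i, i'⟩ hp
    simp only [Finset.mem_filter, Finset.mem_product, mem_range] at hp
    dsimp only
    simp only [Prod.mk.injEq]
    exact ⟨trivial, by omega⟩
  · rintro ⟨m, i⟩ _
    rfl
lemma QE_mul {b : ℕ} {f g : ℤ → ℂ} (hb : 0 < b) (hf : QE b f) (hg : QE b g) :
    QE b (f * g) := by
  classical
  obtain ⟨a₁, M₁, q₁, c₁, hq₁, h₁⟩ := hf
  obtain ⟨a₂, M₂, q₂, c₂, hq₂, h₂⟩ := hg
  have hbR : (0:ℝ) < (b:ℝ) := by exact_mod_cast hb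
  refine ⟨a₁ + a₂, M₁ * M₂,
    fun j => Int.fract (q₁ (finProdFinEquiv.symm j).1 + q₂ (finProdFinEquiv.symm j).2),
    fun j m => ∑ i ∈ range (m + 1),
      c₁ (finProdFinEquiv.symm j).1 i * c₂ (finProdFinEquiv.symm j).2 (m - i),
    fun j => ⟨Int.fract_nonneg _, Int.fract_lt_one _⟩, fun N => ?_⟩
  -- notation
  set Tset : Finset (ℕ × ℕ) :=
    ((range (N + 1)) ×ˢ (range (N + 1))).filter (fun p => ¬ p.1 + p.2 ≤ N) with hTset
  set T : ℤ → ℂ := fun k => ∑ j₁ : Fin M₁, ∑ j₂ : Fin M₂,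
    (Complex.exp (2 * (Real.pi : ℂ) * Complex.I * (k : ℂ) * (q₁ j₁ : ℂ)) *
      Complex.exp (2 * (Real.pi : ℂ) * Complex.I * (k : ℂ) * (q₂ j₂ : ℂ))) *
      ∑ p ∈ Tset, (c₁ j₁ p.1 * c₂ j₂ p.2) *
        (((k : ℝ) ^ (((Int.cast (a₁ + a₂) : ℝ) - ((p.1 + p.2 : ℕ) : ℝ)) / (b : ℝ)) : ℝ) : ℂ)
    with hT
  -- pointwise identity for k ≥ 1
  have key : ∀ k : ℤ, (1:ℤ) ≤ k →
      pS b a₁ q₁ c₁ N k * pS b a₂ q₂ c₂ N k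
        - pS b (a₁ + a₂)
            (fun j => Int.fract (q₁ (finProdFinEquiv.symm j).1 + q₂ (finProdFinEquiv.symm j).2))
            (fun j m => ∑ i ∈ range (m + 1),
              c₁ (finProdFinEquiv.symm j).1 i * c₂ (finProdFinEquiv.symm j).2 (m - i)) N k
      = T k := by
    intro k hk
    have hk0 : (0:ℝ) < (k:ℝ) := by exact_mod_cast lt_of_lt_of_le zero_lt_one hk
    have hprod : pS b a₁ q₁ c₁ N k * pS b a₂ q₂ c₂ N k
        = ∑ j₁ : Fin M₁, ∑ j₂ : Fin M₂,
          (Complex.exp (2 * (Real.pi : ℂ) * Complex.I * (k : ℂ) * (q₁ j₁ : ℂ)) *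
            Complex.exp (2 * (Real.pi : ℂ) * Complex.I * (k : ℂ) * (q₂ j₂ : ℂ))) *
            ∑ p ∈ (range (N + 1)) ×ˢ (range (N + 1)), (c₁ j₁ p.1 * c₂ j₂ p.2) *
              (((k : ℝ) ^ (((Int.cast (a₁ + a₂) : ℝ) - ((p.1 + p.2 : ℕ) : ℝ)) / (b : ℝ)) : ℝ) : ℂ) := by
      unfold pS
      rw [Fintype.sum_mul_sum]
      refine Finset.sum_congr rfl fun j₁ _ => Finset.sum_congr rfl fun j₂ _ => ?_
      rw [mul_mul_mul_comm]
      congr 1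
      rw [Finset.sum_mul_sum, Finset.sum_product]
      refine Finset.sum_congr rfl fun m₁ _ => Finset.sum_congr rfl fun m₂ _ => ?_
      have hr : ((k:ℝ) ^ (((a₁ : ℝ) - (m₁ : ℝ)) / (b : ℝ))) *
            ((k:ℝ) ^ (((a₂ : ℝ) - (m₂ : ℝ)) / (b : ℝ)))
          = (k:ℝ) ^ (((Int.cast (a₁ + a₂) : ℝ) - ((m₁ + m₂ : ℕ) : ℝ)) / (b : ℝ)) := by
        rw [← Real.rpow_add hk0]
        congr 1
        push_cast
        ring
      calc (c₁ j₁ m₁ * (((k:ℝ) ^ (((a₁ : ℝ) - (m₁ : ℝ)) / (b : ℝ)) : ℝ) : ℂ)) *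
            (c₂ j₂ m₂ * (((k:ℝ) ^ (((a₂ : ℝ) - (m₂ : ℝ)) / (b : ℝ)) : ℝ) : ℂ))
          = (c₁ j₁ m₁ * c₂ j₂ m₂) *
            ((((k:ℝ) ^ (((a₁ : ℝ) - (m₁ : ℝ)) / (b : ℝ))) *
              ((k:ℝ) ^ (((a₂ : ℝ) - (m₂ : ℝ)) / (b : ℝ))) : ℝ) : ℂ) := by
            push_cast; ring
        _ = _ := by rw [hr]
    have hconv : pS b (a₁ + a₂)
          (fun j => Int.fract (q₁ (finProdFinEquiv.symm j).1 + q₂ (finProdFinEquiv.symm j).2))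
          (fun j m => ∑ i ∈ range (m + 1),
            c₁ (finProdFinEquiv.symm j).1 i * c₂ (finProdFinEquiv.symm j).2 (m - i)) N k
        = ∑ j₁ : Fin M₁, ∑ j₂ : Fin M₂,
          (Complex.exp (2 * (Real.pi : ℂ) * Complex.I * (k : ℂ) * (q₁ j₁ : ℂ)) *
            Complex.exp (2 * (Real.pi : ℂ) * Complex.I * (k : ℂ) * (q₂ j₂ : ℂ))) *
            ∑ p ∈ ((range (N + 1)) ×ˢ (range (N + 1))).filter (fun p => p.1 + p.2 ≤ N),
              (c₁ j₁ p.1 * c₂ j₂ p.2) *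
              (((k : ℝ) ^ (((Int.cast (a₁ + a₂) : ℝ) - ((p.1 + p.2 : ℕ) : ℝ)) / (b : ℝ)) : ℝ) : ℂ) := by
      unfold pS
      rw [← Equiv.sum_comp finProdFinEquiv]
      rw [Fintype.sum_prod_type]
      refine Finset.sum_congr rfl fun j₁ _ => Finset.sum_congr rfl fun j₂ _ => ?_
      simp only [Equiv.symm_apply_apply]
      rw [qexp_fract_mul]
      congr 1
      have hstep : ∀ m ∈ range (N + 1),
          (∑ i ∈ range (m + 1), c₁ j₁ i * c₂ j₂ (m - i)) *
            (((k : ℝ) ^ (((Int.cast (a₁ + a₂) : ℝ) - (m : ℝ)) / (b : ℝ)) : ℝ) : ℂ)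
          = ∑ i ∈ range (m + 1), (c₁ j₁ i * c₂ j₂ (m - i)) *
              (((k : ℝ) ^ (((Int.cast (a₁ + a₂) : ℝ) - ((i + (m - i) : ℕ) : ℝ)) / (b : ℝ)) : ℝ) : ℂ) := by
        intro m hm
        rw [Finset.sum_mul]
        refine Finset.sum_congr rfl fun i hi => ?_
        have : i + (m - i) = m := by
          have := mem_range.1 hi; omega
        rw [this]
      rw [Finset.sum_congr rfl hstep,
        tri_sum N (fun x y => (c₁ j₁ x * c₂ j₂ y) *
          (((k : ℝ) ^ (((Int.cast (a₁ + a₂) : ℝ) - ((x + y : ℕ) : ℝ)) / (b : ℝ)) : ℝ) : ℂ))]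
    rw [hprod, hconv, hT]
    rw [← Finset.sum_sub_distrib]
    refine Finset.sum_congr rfl fun j₁ _ => ?_
    rw [← Finset.sum_sub_distrib]
    refine Finset.sum_congr rfl fun j₂ _ => ?_
    rw [← mul_sub]
    congr 1
    rw [hTset]
    refine sub_eq_of_eq_add' (Finset.sum_filter_add_sum_filter_not ((range (N + 1)) ×ˢ (range (N + 1)))
      (fun p => p.1 + p.2 ≤ N)
      (fun p => (c₁ j₁ p.1 * c₂ j₂ p.2) *
        (((k : ℝ) ^ (((Int.cast (a₁ + a₂) : ℝ) - ((p.1 + p.2 : ℕ) : ℝ)) / (b : ℝ)) : ℝ) : ℂ))).symm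
  -- asymptotic bounds
  have hA : (fun k : ℤ => (f k - pS b a₁ q₁ c₁ N k) * g k)
      =o[atTop] fun k : ℤ =>
        ((k : ℝ) ^ (((Int.cast (a₁ + a₂) : ℝ) - (N : ℝ)) / (b : ℝ))) := by
    have := (h₁ N).mul_isBigO (QE_f_isBigO hb h₂)
    refine this.congr' EventuallyEq.rfl ?_
    filter_upwards [eventually_ge_atTop (1:ℤ)] with k hk
    have hk0 : (0:ℝ) < (k:ℝ) := by exact_mod_cast lt_of_lt_of_le zero_lt_one hk
    rw [← Real.rpow_add hk0]
    congr 1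
    push_cast
    ring
  have hB : (fun k : ℤ => pS b a₁ q₁ c₁ N k * (g k - pS b a₂ q₂ c₂ N k))
      =o[atTop] fun k : ℤ =>
        ((k : ℝ) ^ (((Int.cast (a₁ + a₂) : ℝ) - (N : ℝ)) / (b : ℝ))) := by
    have := (pS_isBigO hb a₁ q₁ c₁ N le_rfl).mul_isLittleO (h₂ N)
    refine this.congr' EventuallyEq.rfl ?_
    filter_upwards [eventually_ge_atTop (1:ℤ)] with k hk
    have hk0 : (0:ℝ) < (k:ℝ) := by exact_mod_cast lt_of_lt_of_le zero_lt_one hk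
    rw [← Real.rpow_add hk0]
    congr 1
    push_cast
    ring
  have hC : T =o[atTop] fun k : ℤ =>
      ((k : ℝ) ^ (((Int.cast (a₁ + a₂) : ℝ) - (N : ℝ)) / (b : ℝ))) := by
    have hlt : ((Int.cast (a₁ + a₂) : ℝ) - ((N : ℝ) + 1)) / (b : ℝ)
        < ((Int.cast (a₁ + a₂) : ℝ) - (N : ℝ)) / (b : ℝ) := by
      rw [div_lt_div_iff₀ hbR hbR]
      nlinarith
    refine IsBigO.trans_isLittleO ?_ (rpow_littleO hlt)
    rw [hT]
    refine IsBigO.fun_sum fun j₁ _ => ?_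
    refine IsBigO.fun_sum fun j₂ _ => ?_
    have hmul : (fun k : ℤ =>
        (Complex.exp (2 * (Real.pi : ℂ) * Complex.I * (k : ℂ) * (q₁ j₁ : ℂ)) *
          Complex.exp (2 * (Real.pi : ℂ) * Complex.I * (k : ℂ) * (q₂ j₂ : ℂ))) *
          ∑ p ∈ Tset, (c₁ j₁ p.1 * c₂ j₂ p.2) *
            (((k : ℝ) ^ (((Int.cast (a₁ + a₂) : ℝ) - ((p.1 + p.2 : ℕ) : ℝ)) / (b : ℝ)) : ℝ) : ℂ))
        = fun k : ℤ => ∑ p ∈ Tset,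
          (Complex.exp (2 * (Real.pi : ℂ) * Complex.I * (k : ℂ) * (q₁ j₁ : ℂ)) *
            Complex.exp (2 * (Real.pi : ℂ) * Complex.I * (k : ℂ) * (q₂ j₂ : ℂ))) *
            ((c₁ j₁ p.1 * c₂ j₂ p.2) *
            (((k : ℝ) ^ (((Int.cast (a₁ + a₂) : ℝ) - ((p.1 + p.2 : ℕ) : ℝ)) / (b : ℝ)) : ℝ) : ℂ)) := by
      funext k
      rw [Finset.mul_sum]
    rw [hmul]
    refine IsBigO.fun_sum fun p hp => ?_
    have hpN : N + 1 ≤ p.1 + p.2 := by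
      rw [hTset] at hp
      have := (Finset.mem_filter.1 hp).2
      omega
    refine term_isBigO ?_ _ _ (fun k => by rw [norm_mul, norm_qexp, norm_qexp, one_mul])
    rw [div_le_div_iff_of_pos_right hbR]
    have : ((N:ℝ) + 1) ≤ ((p.1 + p.2 : ℕ) : ℝ) := by exact_mod_cast hpN
    linarith
  -- assemble
  have hev : (fun k : ℤ => (f * g) k - pS b (a₁ + a₂)
        (fun j => Int.fract (q₁ (finProdFinEquiv.symm j).1 + q₂ (finProdFinEquiv.symm j).2))
        (fun j m => ∑ i ∈ range (m + 1),
          c₁ (finProdFinEquiv.symm j).1 i * c₂ (finProdFinEquiv.symm j).2 (m - i)) N k)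
      =ᶠ[atTop] fun k : ℤ =>
        ((f k - pS b a₁ q₁ c₁ N k) * g k + pS b a₁ q₁ c₁ N k * (g k - pS b a₂ q₂ c₂ N k)) + T k := by
    filter_upwards [eventually_ge_atTop (1:ℤ)] with k hk
    rw [← key k hk]
    simp only [Pi.mul_apply]
    ring
  exact ((hA.add hB).add hC).congr' hev.symm EventuallyEq.rfl

/-- Sums and products of functions with asymptotic expansions of quantum type again have
asymptotic expansions of quantum type, with respect to the lcm of the two exponents. -/
theorem quantum_expansion_add_mul
    (h : ℤ) (hh : 0 < h) (b₁ b₂ : ℕ) (hb₁ : 0 < b₁) (hb₂ : 0 < b₂)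
    (f₁ f₂ : ℤ → ℂ)
    (hf₁ : HasQuantumExpansion h b₁ f₁) (hf₂ : HasQuantumExpansion h b₂ f₂) :
    HasQuantumExpansion h (Nat.lcm b₁ b₂) (f₁ + f₂) ∧
    HasQuantumExpansion h (Nat.lcm b₁ b₂) (f₁ * f₂) := by
  have hb : 0 < Nat.lcm b₁ b₂ := Nat.pos_of_ne_zero (Nat.lcm_ne_zero hb₁.ne' hb₂.ne')
  have h₁ : QE (Nat.lcm b₁ b₂) f₁ :=
    QE_of_dvd hb₁ hb (Nat.dvd_lcm_left _ _) ((hasQE_iff hh b₁ f₁).1 hf₁)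
  have h₂ : QE (Nat.lcm b₁ b₂) f₂ :=
    QE_of_dvd hb₂ hb (Nat.dvd_lcm_right _ _) ((hasQE_iff hh b₂ f₂).1 hf₂)
  exact ⟨(hasQE_iff hh _ _).2 (QE_add hb h₁ h₂), (hasQE_iff hh _ _).2 (QE_mul hb h₁ h₂)⟩
end

section
/- Let θ₁, θ₂, θ₃ ∈ [0, π]. There exist g₁, g₂, g₃ ∈ SU(2) such that (g₁ D(θ₁) g₁⁻¹)(g₂ D(θ₂) g₂⁻¹)(g₃ D(θ₃) g₃⁻¹) = 1 if and only if |θ₁ − θ₂| ≤ θ₃ ≤ min(θ₁ + θ₂, 2π − θ₁ − θ₂). -/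
open Matrix Complex


/-- The diagonal matrix `D(θ) = diag(e^{iθ}, e^{−iθ}) ∈ SU(2)`. -/
noncomputable def Dmat (θ : ℝ) : Matrix (Fin 2) (Fin 2) ℂ :=
  Matrix.diagonal ![Complex.exp (Complex.I * (θ : ℂ)), Complex.exp (-(Complex.I * (θ : ℂ)))]


theorem Dmat_eq (θ : ℝ) :
    Dmat θ = !![Complex.exp (Complex.I * θ), 0; 0, Complex.exp (-(Complex.I * θ))] := by
  ext i j; fin_cases i <;> fin_cases j <;> simp [Dmat, Matrix.diagonal]

theorem exp_I_eq (θ : ℝ) : Complex.exp (Complex.I * θ) = Real.cos θ + Real.sin θ * Complex.I := by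
  rw [mul_comm, Complex.exp_mul_I]; push_cast; ring

theorem exp_neg_I_eq (θ : ℝ) :
    Complex.exp (-(Complex.I * θ)) = Real.cos θ - Real.sin θ * Complex.I := by
  have : -(Complex.I * (θ:ℂ)) = Complex.I * ((-θ : ℝ) : ℂ) := by push_cast; ring
  rw [this, exp_I_eq]; push_cast [Real.cos_neg, Real.sin_neg]; ring

theorem su2_form {g : Matrix (Fin 2) (Fin 2) ℂ} (hg : g ∈ Matrix.specialUnitaryGroup (Fin 2) ℂ) :
    ∃ a b : ℂ, a * star a + b * star b = 1 ∧ g = !![a, b; -(star b), star a] := by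
  obtain ⟨hu, hdet⟩ := Matrix.mem_specialUnitaryGroup_iff.mp hg
  have hinv : g⁻¹ = star g := inv_eq_left_inv (Matrix.UnitaryGroup.star_mul_self ⟨g, hu⟩)
  have hadj : g⁻¹ = g.adjugate := by
    rw [Matrix.inv_def, hdet]; simp
  have h2 : star g = g.adjugate := by rw [← hinv, hadj]
  have ha : g.adjugate = !![g 1 1, -(g 0 1); -(g 1 0), g 0 0] := by
    rw [Matrix.eta_fin_two g, Matrix.adjugate_fin_two]
  rw [ha] at h2
  have e10 : star (g 0 1) = -(g 1 0) := by
    have := congrFun (congrFun h2 1) 0; simpa [Matrix.star_apply] using this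
  have e11 : star (g 0 0) = g 1 1 := by
    have := congrFun (congrFun h2 0) 0; simpa [Matrix.star_apply] using this
  refine ⟨g 0 0, g 0 1, ?_, ?_⟩
  · have h1 : (g * star g) 0 0 = (1 : Matrix (Fin 2) (Fin 2) ℂ) 0 0 := by
      rw [Matrix.mem_unitaryGroup_iff.mp hu]
    simpa [Matrix.mul_apply, Fin.sum_univ_two, Matrix.star_apply] using h1
  · rw [Matrix.eta_fin_two g]
    have e10' : (starRingEnd ℂ) (g 0 1) = -g 1 0 := e10
    have e11' : (starRingEnd ℂ) (g 0 0) = g 1 1 := e11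
    ext i j
    fin_cases i <;> fin_cases j <;> simp [e10', e11']

theorem su2_mk {a b : ℂ} (h : a * (starRingEnd ℂ) a + b * (starRingEnd ℂ) b = 1) :
    !![a, b; -(star b), star a] ∈ Matrix.specialUnitaryGroup (Fin 2) ℂ := by
  rw [Matrix.mem_specialUnitaryGroup_iff]
  constructor
  · rw [Matrix.mem_unitaryGroup_iff]
    ext i j
    fin_cases i <;> fin_cases j <;>
      simp [Matrix.mul_apply, Fin.sum_univ_two, Matrix.star_apply, Matrix.one_apply] <;>
      first
        | linear_combination h
        | ring1
  · rw [Matrix.det_fin_two]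
    simp
    linear_combination h

theorem su2_inv_eq_star {g : Matrix (Fin 2) (Fin 2) ℂ}
    (hg : g ∈ Matrix.specialUnitaryGroup (Fin 2) ℂ) : g⁻¹ = star g :=
  inv_eq_left_inv (Matrix.UnitaryGroup.star_mul_self
    ⟨g, (Matrix.mem_specialUnitaryGroup_iff.mp hg).1⟩)

theorem su2_mul_star {g : Matrix (Fin 2) (Fin 2) ℂ}
    (hg : g ∈ Matrix.specialUnitaryGroup (Fin 2) ℂ) : g * star g = 1 :=
  Matrix.mem_unitaryGroup_iff.mp (Matrix.mem_specialUnitaryGroup_iff.mp hg).1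

theorem su2_star_mul {g : Matrix (Fin 2) (Fin 2) ℂ}
    (hg : g ∈ Matrix.specialUnitaryGroup (Fin 2) ℂ) : star g * g = 1 :=
  Matrix.mem_unitaryGroup_iff'.mp (Matrix.mem_specialUnitaryGroup_iff.mp hg).1


theorem su2_star_mem {g : Matrix (Fin 2) (Fin 2) ℂ}
    (hg : g ∈ Matrix.specialUnitaryGroup (Fin 2) ℂ) :
    star g ∈ Matrix.specialUnitaryGroup (Fin 2) ℂ := by
  obtain ⟨hu, hdet⟩ := Matrix.mem_specialUnitaryGroup_iff.mp hg
  refine Matrix.mem_specialUnitaryGroup_iff.mpr ⟨Unitary.star_mem hu, ?_⟩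
  rw [Matrix.star_eq_conjTranspose, Matrix.det_conjTranspose, hdet]
  simp

theorem su2_inv_mem {g : Matrix (Fin 2) (Fin 2) ℂ}
    (hg : g ∈ Matrix.specialUnitaryGroup (Fin 2) ℂ) :
    g⁻¹ ∈ Matrix.specialUnitaryGroup (Fin 2) ℂ := by
  rw [su2_inv_eq_star hg]; exact su2_star_mem hg

theorem trace_conj {g X : Matrix (Fin 2) (Fin 2) ℂ} (h : g⁻¹ * g = 1) :
    Matrix.trace (g * X * g⁻¹) = Matrix.trace X := by
  rw [Matrix.trace_mul_comm, ← Matrix.mul_assoc, h, Matrix.one_mul]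

theorem trace_Dmat (θ : ℝ) : Matrix.trace (Dmat θ) = ((2 * Real.cos θ : ℝ) : ℂ) := by
  rw [Dmat_eq]
  simp [Matrix.trace_fin_two, exp_I_eq, exp_neg_I_eq]
  push_cast
  ring

theorem star_mat (a b : ℂ) :
    star !![a, b; -(star b), star a] = !![star a, -b; star b, a] := by
  ext i j; fin_cases i <;> fin_cases j <;> simp [Matrix.star_apply]

theorem trace_formula (θ₁ θ₂ : ℝ) (a b : ℂ) :
    Matrix.trace (Dmat θ₁ * (!![a, b; -(star b), star a] * Dmat θ₂ *
        star !![a, b; -(star b), star a]))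
      = ((2 * Complex.normSq a * Real.cos (θ₁ + θ₂)
          + 2 * Complex.normSq b * Real.cos (θ₁ - θ₂) : ℝ) : ℂ) := by
  have haa : a * (starRingEnd ℂ) a = (Complex.normSq a : ℂ) := Complex.mul_conj a
  have hbb : b * (starRingEnd ℂ) b = (Complex.normSq b : ℂ) := Complex.mul_conj b
  rw [star_mat, Dmat_eq, Dmat_eq, exp_I_eq, exp_neg_I_eq, exp_I_eq, exp_neg_I_eq]
  rw [Real.cos_add, Real.cos_sub]
  simp [Matrix.trace_fin_two, Matrix.mul_apply, Fin.sum_univ_two]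
  push_cast
  linear_combination (2 * Complex.cos θ₁ * Complex.cos θ₂ + 2 * Complex.sin θ₁ * Complex.sin θ₂ * Complex.I^2) * haa + (2 * Complex.cos θ₁ * Complex.cos θ₂ - 2 * Complex.sin θ₁ * Complex.sin θ₂ * Complex.I^2) * hbb + (Complex.sin θ₁ * Complex.sin θ₂ * 2 * Complex.normSq a - Complex.sin θ₁ * Complex.sin θ₂ * 2 * Complex.normSq b) * Complex.I_sq

theorem conj_to_Dmat (θ : ℝ) {X : Matrix (Fin 2) (Fin 2) ℂ}
    (hX : X ∈ Matrix.specialUnitaryGroup (Fin 2) ℂ)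
    (htr : Matrix.trace X = ((2 * Real.cos θ : ℝ) : ℂ)) :
    ∃ g ∈ Matrix.specialUnitaryGroup (Fin 2) ℂ, g * Dmat θ * g⁻¹ = X := by
  obtain ⟨a, b, hab, rfl⟩ := su2_form hX
  set c := Real.cos θ with hc
  set s := Real.sin θ with hs
  have htr' : a + (starRingEnd ℂ) a = ((2 * c : ℝ) : ℂ) := by
    simpa [Matrix.trace_fin_two] using htr
  have hre : a.re = c := by
    have := congrArg Complex.re htr'
    simp [Complex.add_re, Complex.conj_re] at this
    linarith
  set y := a.im with hy
  have ha : a = (c : ℂ) + (y : ℂ) * Complex.I := by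
    rw [← hre]; exact (Complex.re_add_im a).symm
  have hsum : Complex.normSq a + Complex.normSq b = 1 := by
    have h0 : ((Complex.normSq a + Complex.normSq b : ℝ) : ℂ) = 1 := by
      push_cast
      rw [← Complex.mul_conj, ← Complex.mul_conj]
      exact hab
    exact_mod_cast h0
  have hna : Complex.normSq a = c ^ 2 + y ^ 2 := by
    rw [Complex.normSq_apply, hre]; ring
  have hsc : s ^ 2 + c ^ 2 = 1 := Real.sin_sq_add_cos_sq θ
  have hb2 : Complex.normSq b = s ^ 2 - y ^ 2 := by nlinarith
  rw [show (2 * c : ℝ) = 2 * Real.cos θ by rw [hc]] at htr'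
  clear_value c s y
  rcases eq_or_lt_of_le (add_nonneg (Complex.normSq_nonneg b) (sq_nonneg (s - y)) : (0:ℝ) ≤ Complex.normSq b + (s - y) ^ 2) with h0 | hpos
  · -- degenerate case : X = Dmat θ
    have hbz : Complex.normSq b = 0 := by nlinarith [Complex.normSq_nonneg b, sq_nonneg (s - y)]
    have hb0 : b = 0 := by rwa [Complex.normSq_eq_zero] at hbz
    have hys : y = s := by nlinarith [sq_nonneg (s - y)]
    refine ⟨1, Submonoid.one_mem _, ?_⟩
    have h1inv : (1 : Matrix (Fin 2) (Fin 2) ℂ)⁻¹ = 1 := by simp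
    rw [h1inv, Matrix.one_mul, Matrix.mul_one, Dmat_eq, exp_I_eq, exp_neg_I_eq]
    rw [hb0, ha, hys, ← hc, ← hs]
    ext i j
    fin_cases i <;> fin_cases j <;>
      simp [map_add, Complex.conj_ofReal, Complex.conj_I] <;> ring
  · -- main case
    set n := Real.sqrt (Complex.normSq b + (s - y) ^ 2) with hn
    have hnpos : 0 < n := Real.sqrt_pos.mpr hpos
    have hnsq : (n : ℝ) ^ 2 = Complex.normSq b + (s - y) ^ 2 := Real.sq_sqrt hpos.le
    have hnne : ((n : ℝ) : ℂ) ≠ 0 := by exact_mod_cast hnpos.ne'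
    clear_value n
    set p : ℂ := b / (n : ℂ) with hp
    set q : ℂ := (((s - y : ℝ) : ℂ) / (n : ℂ)) * Complex.I with hq
    have hbb : b * (starRingEnd ℂ) b = ((Complex.normSq b : ℝ) : ℂ) := Complex.mul_conj b
    have hnc : ((n:ℝ):ℂ)^2 = (Complex.normSq b : ℂ) + (((s:ℝ):ℂ) - ((y:ℝ):ℂ))^2 := by
      exact_mod_cast hnsq
    have hmem : p * (starRingEnd ℂ) p + q * (starRingEnd ℂ) q = 1 := by
      rw [hp, hq]
      simp only [_root_.map_mul, map_div₀, Complex.conj_ofReal, Complex.conj_I]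
      field_simp
      linear_combination hbb - hnc - ((s - y : ℝ) : ℂ)^2 * Complex.I_sq + (((s - y : ℝ) : ℂ) + ((s:ℂ)-(y:ℂ))) * Complex.ofReal_sub s y
    have hgmem := su2_mk hmem
    set g := !![p, q; -(star q), star p] with hgdef
    have hginv : g⁻¹ = star g := su2_inv_eq_star hgmem
    have hgg : g * g⁻¹ = 1 := by rw [hginv]; exact su2_mul_star hgmem
    refine ⟨g, hgmem, ?_⟩
    have key : g * Dmat θ = !![a, b; -(star b), star a] * g := by
      rw [Dmat_eq, exp_I_eq, exp_neg_I_eq, ha, hgdef, hp, hq]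
      have hbb2 : b * (starRingEnd ℂ) b = ((s:ℂ)^2 - (y:ℂ)^2) := by
        rw [hbb]; push_cast [hb2]; ring
      ext i j
      fin_cases i <;> fin_cases j <;>
        simp [Matrix.mul_apply, Fin.sum_univ_two, _root_.map_mul, map_div₀,
          Complex.conj_ofReal, Complex.conj_I, map_add]
      all_goals try simp only [← Complex.ofReal_cos, ← Complex.ofReal_sin, ← hc, ← hs]
      all_goals first
        | ring1
        | linear_combination (1/(n:ℂ)) * hbb2 + (((s:ℂ)-y)*((s:ℂ)+y)/(n:ℂ)) * Complex.I_sq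
        | linear_combination (-(1:ℂ)/(n:ℂ)) * hbb2 + (-(((s:ℂ)-y)*((s:ℂ)+y))/(n:ℂ)) * Complex.I_sq
    rw [key, Matrix.mul_assoc, hgg, Matrix.mul_one]

theorem star_exp_I (θ : ℝ) :
    (starRingEnd ℂ) (Complex.exp (Complex.I * θ)) = Complex.exp (-(Complex.I * θ)) := by
  rw [← Complex.exp_conj]; congr 1; simp

theorem Dmat_mem (θ : ℝ) : Dmat θ ∈ Matrix.specialUnitaryGroup (Fin 2) ℂ := by
  have h : Complex.exp (Complex.I * θ) * (starRingEnd ℂ) (Complex.exp (Complex.I * θ))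
      + 0 * (starRingEnd ℂ) 0 = 1 := by
    rw [star_exp_I, ← Complex.exp_add]; simp
  have h2 := su2_mk h
  have he : Dmat θ = !![Complex.exp (Complex.I * θ), 0;
      -(star (0:ℂ)), star (Complex.exp (Complex.I * θ))] := by
    rw [Dmat_eq]
    congr 1 <;> simp [star_exp_I]
  rwa [he]

theorem su2_normSq_sum {a b : ℂ} (h : a * star a + b * star b = 1) :
    Complex.normSq a + Complex.normSq b = 1 := by
  have h0 : ((Complex.normSq a + Complex.normSq b : ℝ) : ℂ) = 1 := by
    push_cast
    rw [← Complex.mul_conj, ← Complex.mul_conj]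
    exact h
  exact_mod_cast h0


/-- For `θ₁, θ₂, θ₃ ∈ [0, π]` there exist `g₁, g₂, g₃ ∈ SU(2)` with
`(g₁D(θ₁)g₁⁻¹)(g₂D(θ₂)g₂⁻¹)(g₃D(θ₃)g₃⁻¹) = 1` if and only if
`|θ₁ − θ₂| ≤ θ₃ ≤ min(θ₁ + θ₂, 2π − θ₁ − θ₂)`. -/
theorem su2_triangle_condition
    (θ₁ θ₂ θ₃ : ℝ)
    (h₁ : θ₁ ∈ Set.Icc (0 : ℝ) Real.pi) (h₂ : θ₂ ∈ Set.Icc (0 : ℝ) Real.pi)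
    (h₃ : θ₃ ∈ Set.Icc (0 : ℝ) Real.pi) :
    (∃ g₁ g₂ g₃ : Matrix (Fin 2) (Fin 2) ℂ,
        g₁ ∈ Matrix.specialUnitaryGroup (Fin 2) ℂ ∧
        g₂ ∈ Matrix.specialUnitaryGroup (Fin 2) ℂ ∧
        g₃ ∈ Matrix.specialUnitaryGroup (Fin 2) ℂ ∧
        g₁ * Dmat θ₁ * g₁⁻¹ * (g₂ * Dmat θ₂ * g₂⁻¹) * (g₃ * Dmat θ₃ * g₃⁻¹) = 1) ↔
      (|θ₁ - θ₂| ≤ θ₃ ∧ θ₃ ≤ min (θ₁ + θ₂) (2 * Real.pi - θ₁ - θ₂)) := by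
  obtain ⟨hθ1a, hθ1b⟩ := h₁
  obtain ⟨hθ2a, hθ2b⟩ := h₂
  obtain ⟨hθ3a, hθ3b⟩ := h₃
  constructor
  · rintro ⟨g₁, g₂, g₃, m₁, m₂, m₃, heq⟩
    set A := g₁ * Dmat θ₁ * g₁⁻¹ with hA
    set B := g₂ * Dmat θ₂ * g₂⁻¹ with hB
    set C := g₃ * Dmat θ₃ * g₃⁻¹ with hC
    have mA : A ∈ Matrix.specialUnitaryGroup (Fin 2) ℂ :=
      mul_mem (mul_mem m₁ (Dmat_mem θ₁)) (su2_inv_mem m₁)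
    have mB : B ∈ Matrix.specialUnitaryGroup (Fin 2) ℂ :=
      mul_mem (mul_mem m₂ (Dmat_mem θ₂)) (su2_inv_mem m₂)
    have hCinv : (A * B)⁻¹ = C := Matrix.inv_eq_right_inv heq
    have hCstar : C = star (A * B) := by
      rw [← hCinv, su2_inv_eq_star (mul_mem mA mB)]
    have hg3 : g₃⁻¹ * g₃ = 1 := by rw [su2_inv_eq_star m₃]; exact su2_star_mul m₃
    have htrC : Matrix.trace C = ((2 * Real.cos θ₃ : ℝ) : ℂ) := by
      rw [hC, trace_conj hg3, trace_Dmat]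
    set u := g₁⁻¹ * g₂ with hu
    have mu : u ∈ Matrix.specialUnitaryGroup (Fin 2) ℂ := mul_mem (su2_inv_mem m₁) m₂
    obtain ⟨va, vb, hvab, huform⟩ := su2_form mu
    have hg1 : g₁ * g₁⁻¹ = 1 := by rw [su2_inv_eq_star m₁]; exact su2_mul_star m₁
    have hg1' : g₁⁻¹ * g₁ = 1 := by rw [su2_inv_eq_star m₁]; exact su2_star_mul m₁
    have hsu : star u = g₂⁻¹ * g₁ := by
      calc star u = star g₂ * star g₁⁻¹ := by rw [hu]; exact Matrix.star_mul _ _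
        _ = g₂⁻¹ * g₁ := by rw [su2_inv_eq_star m₁, star_star, su2_inv_eq_star m₂]
    have hABrw : A * B = g₁ * (Dmat θ₁ * (u * Dmat θ₂ * star u)) * g₁⁻¹ := by
      rw [hsu, hu, hA, hB]
      simp only [Matrix.mul_assoc, hg1, Matrix.mul_one]
    have htrAB : Matrix.trace (A * B)
        = ((2 * Complex.normSq va * Real.cos (θ₁ + θ₂)
            + 2 * Complex.normSq vb * Real.cos (θ₁ - θ₂) : ℝ) : ℂ) := by
      rw [hABrw, trace_conj hg1', huform, trace_formula]
    have hmain : ((2 * Real.cos θ₃ : ℝ) : ℂ)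
        = ((2 * Complex.normSq va * Real.cos (θ₁ + θ₂)
            + 2 * Complex.normSq vb * Real.cos (θ₁ - θ₂) : ℝ) : ℂ) := by
      rw [← htrC, hCstar, Matrix.star_eq_conjTranspose, Matrix.trace_conjTranspose, htrAB]
      exact Complex.conj_ofReal _
    have hRe : 2 * Real.cos θ₃ = 2 * Complex.normSq va * Real.cos (θ₁ + θ₂)
        + 2 * Complex.normSq vb * Real.cos (θ₁ - θ₂) := by exact_mod_cast hmain
    have hvsum := su2_normSq_sum hvab
    set t := Complex.normSq va with ht
    have ht0 : 0 ≤ t := Complex.normSq_nonneg va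
    have ht1 : t ≤ 1 := by nlinarith [Complex.normSq_nonneg vb]
    have htb : Complex.normSq vb = 1 - t := by linarith
    have key : Real.cos θ₃ = t * Real.cos (θ₁ + θ₂) + (1 - t) * Real.cos (θ₁ - θ₂) := by
      linear_combination hRe / 2 + Real.cos (θ₁ - θ₂) * htb
    have hcc : Real.cos (θ₁ + θ₂) ≤ Real.cos (θ₁ - θ₂) := by
      rw [Real.cos_add, Real.cos_sub]
      nlinarith [mul_nonneg (Real.sin_nonneg_of_nonneg_of_le_pi hθ1a hθ1b)
        (Real.sin_nonneg_of_nonneg_of_le_pi hθ2a hθ2b)]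
    have h3le : Real.cos θ₃ ≤ Real.cos (θ₁ - θ₂) := by
      nlinarith [mul_nonneg ht0 (sub_nonneg.mpr hcc)]
    have h3ge : Real.cos (θ₁ + θ₂) ≤ Real.cos θ₃ := by
      nlinarith [mul_nonneg (by linarith : (0:ℝ) ≤ 1 - t) (sub_nonneg.mpr hcc)]
    refine ⟨?_, le_min ?_ ?_⟩
    · by_contra hcon; push_neg at hcon
      have habs : |θ₁ - θ₂| ≤ Real.pi := abs_le.mpr ⟨by linarith, by linarith⟩
      have hlt := Real.strictAntiOn_cos ⟨hθ3a, hθ3b⟩ ⟨abs_nonneg _, habs⟩ hcon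
      rw [Real.cos_abs] at hlt
      linarith
    · rcases le_or_gt (θ₁ + θ₂) Real.pi with hsum | hsum
      · by_contra hcon; push_neg at hcon
        have hlt := Real.strictAntiOn_cos ⟨by linarith, hsum⟩ ⟨hθ3a, hθ3b⟩ hcon
        linarith
      · linarith
    · rcases le_or_gt (θ₁ + θ₂) Real.pi with hsum | hsum
      · linarith
      · by_contra hcon; push_neg at hcon
        have hm : (2 * Real.pi - θ₁ - θ₂) ∈ Set.Icc 0 Real.pi :=
          ⟨by nlinarith [Real.pi_pos], by linarith⟩
        have hlt := Real.strictAntiOn_cos hm ⟨hθ3a, hθ3b⟩ hcon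
        rw [show (2 * Real.pi - θ₁ - θ₂) = 2 * Real.pi - (θ₁ + θ₂) by ring,
          Real.cos_two_pi_sub] at hlt
        linarith
  · rintro ⟨hL, hR'⟩
    have hR1 : θ₃ ≤ θ₁ + θ₂ := le_trans hR' (min_le_left _ _)
    have hR2 : θ₃ ≤ 2 * Real.pi - θ₁ - θ₂ := le_trans hR' (min_le_right _ _)
    have hup : Real.cos θ₃ ≤ Real.cos (θ₁ - θ₂) := by
      have h := Real.cos_le_cos_of_nonneg_of_le_pi (abs_nonneg (θ₁ - θ₂)) hθ3b hL
      rwa [Real.cos_abs] at h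
    have hlo : Real.cos (θ₁ + θ₂) ≤ Real.cos θ₃ := by
      rcases le_or_gt (θ₁ + θ₂) Real.pi with hsum | hsum
      · exact Real.cos_le_cos_of_nonneg_of_le_pi hθ3a hsum hR1
      · have h := Real.cos_le_cos_of_nonneg_of_le_pi hθ3a
          (by linarith : 2 * Real.pi - θ₁ - θ₂ ≤ Real.pi) hR2
        rwa [show (2 * Real.pi - θ₁ - θ₂) = 2 * Real.pi - (θ₁ + θ₂) by ring,
          Real.cos_two_pi_sub] at h
    obtain ⟨t, ht0, ht1, htc⟩ : ∃ t : ℝ, 0 ≤ t ∧ t ≤ 1 ∧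
        t * Real.cos (θ₁ + θ₂) + (1 - t) * Real.cos (θ₁ - θ₂) = Real.cos θ₃ := by
      rcases eq_or_lt_of_le (le_trans hlo hup) with he | hlt
      · refine ⟨0, le_rfl, zero_le_one, ?_⟩
        have hcc : Real.cos (θ₁ - θ₂) = Real.cos θ₃ := le_antisymm (by linarith) hup
        linear_combination hcc
      · refine ⟨(Real.cos (θ₁ - θ₂) - Real.cos θ₃) / (Real.cos (θ₁ - θ₂) - Real.cos (θ₁ + θ₂)),
          div_nonneg (by linarith) (by linarith), ?_, ?_⟩
        · rw [div_le_one (by linarith)]; linarith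
        · have hd : Real.cos (θ₁ - θ₂) - Real.cos (θ₁ + θ₂) ≠ 0 := ne_of_gt (by linarith)
          field_simp
          ring
    set ar := Real.sqrt t with harr
    set br := Real.sqrt (1 - t) with hbrr
    have har : ar ^ 2 = t := Real.sq_sqrt ht0
    have hbr : br ^ 2 = 1 - t := Real.sq_sqrt (by linarith)
    have hvab : ((ar : ℝ) : ℂ) * star ((ar : ℝ) : ℂ) + ((br : ℝ) : ℂ) * star ((br : ℝ) : ℂ) = 1 := by
      simp only [Complex.star_def, Complex.conj_ofReal]
      norm_cast
      nlinarith [har, hbr]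
    set u := !![((ar : ℝ) : ℂ), ((br : ℝ) : ℂ);
      -(star ((br : ℝ) : ℂ)), star ((ar : ℝ) : ℂ)] with hudef
    have mu : u ∈ Matrix.specialUnitaryGroup (Fin 2) ℂ := su2_mk hvab
    set M := Dmat θ₁ * (u * Dmat θ₂ * star u) with hM
    have mM : M ∈ Matrix.specialUnitaryGroup (Fin 2) ℂ :=
      mul_mem (Dmat_mem θ₁) (mul_mem (mul_mem mu (Dmat_mem θ₂)) (su2_star_mem mu))
    have htrM : Matrix.trace M = ((2 * Real.cos θ₃ : ℝ) : ℂ) := by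
      rw [hM, hudef, trace_formula]
      norm_cast
      rw [Complex.normSq_ofReal, Complex.normSq_ofReal]
      linear_combination (2 * Real.cos (θ₁ + θ₂)) * har + (2 * Real.cos (θ₁ - θ₂)) * hbr
        + 2 * htc
    have htrsM : Matrix.trace (star M) = ((2 * Real.cos θ₃ : ℝ) : ℂ) := by
      rw [Matrix.star_eq_conjTranspose, Matrix.trace_conjTranspose, htrM]
      exact Complex.conj_ofReal _
    obtain ⟨g₃, mg₃, hg₃⟩ := conj_to_Dmat θ₃ (su2_star_mem mM) htrsM
    refine ⟨1, u, g₃, Submonoid.one_mem _, mu, mg₃, ?_⟩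
    have h1inv : (1 : Matrix (Fin 2) (Fin 2) ℂ)⁻¹ = 1 := by simp
    rw [hg₃, h1inv, Matrix.one_mul, Matrix.mul_one, su2_inv_eq_star mu, ← hM]
    exact su2_mul_star mM
end
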